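/- Let X ⊆ ℝ^n be a nonempty (possibly unbounded) open set, let F : X × ℝ^M → ℝ be jointly continuous, and let f : X → ℝ be continuous with f(x) ∈ int R_x for every x ∈ X. Then for every ε > 0 there exist a subset Γ_ε ⊂ X that is closed and nowhere dense in X and has Lebesgue measure zero, and a smooth function U_ε ∈ C^∞(X ∖ Γ_ε), such that f(x) − ε ≤ T(x,D)U_ε(x) ≤ f(x) for all x ∈ X ∖ Γ_ε. -/

import Mathlib

open Set Topology Filter

/-- The partial derivative of `f` in the `i`-th coordinate direction. -/
noncomputable def pder {n : ℕ} (i : Fin n) (f : (Fin n → ℝ) → ℝ) : (Fin n → ℝ) → ℝ :=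
  fun x => fderiv ℝ f x (Pi.single i 1)

/-- The multi-index partial derivative `D^p f` for a multi-index `p : Fin n → ℕ`. -/
noncomputable def mderiv {n : ℕ} (p : Fin n → ℕ) (f : (Fin n → ℝ) → ℝ) : (Fin n → ℝ) → ℝ :=
  (List.finRange n).foldr (fun i g => (pder i)^[p i] g) f

/-- The nonlinear partial differential operator `T(x,D)` associated to `F`, where
`e : Fin M → (Fin n → ℕ)` enumerates the multi-indices `p` with `|p| ≤ m`:
`T(x,D)U(x) = F(x, (D^p U(x))_{|p| ≤ m})`. -/
noncomputable def TOp {n M : ℕ} (e : Fin M → (Fin n → ℕ))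
    (F : (Fin n → ℝ) → (Fin M → ℝ) → ℝ) (U : (Fin n → ℝ) → ℝ) : (Fin n → ℝ) → ℝ :=
  fun x => F x (fun i => mderiv (e i) U x)

/-!
Near each `x ∈ X` pick `ξ` with `F x ξ` in `(f x - ε, f x)`, possible since `f x` is an interior
point of the range, and let `P` be the Taylor polynomial at `x` whose derivatives `D^p P x` are the
entries of `ξ`. All derivatives of `P` are continuous, so `T(·,D)P` stays in `(f - ε, f)` on a
ball around `x`. Countably many such balls `B_k` cover `X`; the sets
`B_k \ (closure B_0 ∪ ⋯ ∪ closure B_(k-1))` are open and disjoint, and gluing the polynomials on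
them gives `U`. The part of `X` they miss is relatively closed and lies in the union of the spheres
`∂B_k`, so it is a null set, hence nowhere dense.
-/

def centeredMonomial {n : ℕ} (c : Fin n → ℝ) (p : Fin n → ℕ) : (Fin n → ℝ) → ℝ :=
  fun y => ∏ j, (y j - c j) ^ p j

def centeredPolynomial {n M : ℕ} (c : Fin n → ℝ) (b : Fin M → ℝ) (P : Fin M → Fin n → ℕ) :
    (Fin n → ℝ) → ℝ :=
  fun y => ∑ k, b k * centeredMonomial c (P k) y

section Polynomial

variable {n M : ℕ} (c : Fin n → ℝ)

theorem contDiff_centeredMonomial (p : Fin n → ℕ) :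
    ContDiff ℝ (⊤ : ℕ∞) (centeredMonomial c p) :=
  contDiff_prod fun j _ => ((contDiff_apply ℝ ℝ j).sub contDiff_const).pow _

theorem contDiff_centeredPolynomial (b : Fin M → ℝ) (P : Fin M → Fin n → ℕ) :
    ContDiff ℝ (⊤ : ℕ∞) (centeredPolynomial c b P) :=
  ContDiff.sum fun k _ => contDiff_const.mul (contDiff_centeredMonomial c (P k))

theorem centeredMonomial_self (p : Fin n → ℕ) :
    centeredMonomial c p c = if p = 0 then 1 else 0 := by
  split_ifs with hp
  · simp [centeredMonomial, hp]
  · obtain ⟨j, hj⟩ := Function.ne_iff.1 hp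
    exact Finset.prod_eq_zero (Finset.mem_univ j) (by simpa using hj)

theorem hasFDerivAt_centeredMonomial (p : Fin n → ℕ) (x : Fin n → ℝ) :
    HasFDerivAt (centeredMonomial c p)
      (∑ j, (∏ k ∈ Finset.univ.erase j, (x k - c k) ^ p k) •
        ((p j * (x j - c j) ^ (p j - 1)) •
          (ContinuousLinearMap.proj j : (Fin n → ℝ) →L[ℝ] ℝ))) x := by
  refine HasFDerivAt.finsetProd fun j _ => ?_
  have hd : HasDerivAt (fun t : ℝ => (t - c j) ^ p j) (p j * (x j - c j) ^ (p j - 1)) (x j) := by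
    simpa using ((hasDerivAt_id (x j)).sub_const (c j)).fun_pow (p j)
  exact hd.comp_hasFDerivAt (f := fun y : Fin n → ℝ => y j) x (hasFDerivAt_apply j x)

theorem pder_centeredMonomial (p : Fin n → ℕ) (i : Fin n) :
    pder i (centeredMonomial c p) =
      fun y => p i * centeredMonomial c (Function.update p i (p i - 1)) y := by
  funext x
  rw [pder, (hasFDerivAt_centeredMonomial c p x).fderiv]
  simp only [FunLike.coe_sum, Finset.sum_apply, FunLike.coe_smul,
    Pi.smul_apply, ContinuousLinearMap.proj_apply, smul_eq_mul]
  have herase : ∏ k ∈ Finset.univ.erase i, (x k - c k) ^ Function.update p i (p i - 1) k =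
      ∏ k ∈ Finset.univ.erase i, (x k - c k) ^ p k :=
    Finset.prod_congr rfl fun k hk => by rw [Function.update_of_ne (Finset.ne_of_mem_erase hk)]
  rw [Finset.sum_eq_single i (fun j _ hj => by simp [Pi.single_eq_of_ne' hj.symm]) (by simp),
    centeredMonomial, ← Finset.mul_prod_erase _ _ (Finset.mem_univ i), Function.update_self,
    herase]
  simp only [Pi.single_eq_same, mul_one]
  ring

theorem pder_centeredPolynomial (b : Fin M → ℝ) (P : Fin M → Fin n → ℕ) (i : Fin n) :
    pder i (centeredPolynomial c b P) =
      centeredPolynomial c (fun k => b k * P k i)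
        (fun k => Function.update (P k) i (P k i - 1)) := by
  funext x
  have hmon k := (contDiff_centeredMonomial c (P k)).differentiable (by simp) x
  unfold pder centeredPolynomial
  rw [fderiv_fun_sum fun k _ => (hmon k).const_mul (b k), _root_.sum_apply]
  refine Finset.sum_congr rfl fun k _ => ?_
  rw [fderiv_const_mul (hmon k), _root_.smul_apply, smul_eq_mul, ← pder,
    pder_centeredMonomial]
  ring

theorem iterate_pder_centeredPolynomial (b : Fin M → ℝ) (P : Fin M → Fin n → ℕ) (i : Fin n)
    (t : ℕ) :
    (pder i)^[t] (centeredPolynomial c b P) =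
      centeredPolynomial c (fun k => b k * (P k i).descFactorial t)
        (fun k => Function.update (P k) i (P k i - t)) := by
  induction t with
  | zero => simp [Function.update_eq_self]
  | succ t ih =>
    rw [Function.iterate_succ_apply', ih, pder_centeredPolynomial]
    congr 1
    · funext k
      simp only [Function.update_self, Nat.descFactorial_succ]
      push_cast
      ring
    · funext k
      rw [Function.update_idem, Function.update_self, Nat.sub_sub]

theorem foldr_iterate_pder_centeredPolynomial (b : Fin M → ℝ) (P : Fin M → Fin n → ℕ)
    (q : Fin n → ℕ) (l : List (Fin n)) (hl : l.Nodup) :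
    l.foldr (fun i g => (pder i)^[q i] g) (centeredPolynomial c b P) =
      centeredPolynomial c (fun k => b k * ∏ j ∈ l.toFinset, ((P k j).descFactorial (q j) : ℝ))
        (fun k j => if j ∈ l then P k j - q j else P k j) := by
  induction l with
  | nil => simp
  | cons a l ih =>
    obtain ⟨hal, hl⟩ := List.nodup_cons.1 hl
    rw [List.foldr_cons, ih hl, iterate_pder_centeredPolynomial]
    congr 1
    · funext k
      rw [if_neg hal, List.toFinset_cons, Finset.prod_insert (by simpa using hal)]
      ring
    · funext k j
      rcases eq_or_ne j a with rfl | hja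
      · simp [hal]
      · simp [hja]

theorem mderiv_centeredPolynomial (b : Fin M → ℝ) (P : Fin M → Fin n → ℕ) (q : Fin n → ℕ) :
    mderiv q (centeredPolynomial c b P) =
      centeredPolynomial c (fun k => b k * ∏ j, ((P k j).descFactorial (q j) : ℝ))
        (fun k => P k - q) := by
  rw [mderiv, foldr_iterate_pder_centeredPolynomial c b P q _ (List.nodup_finRange n)]
  simp only [List.mem_finRange, if_true, List.toFinset_finRange]
  rfl

end Polynomial

theorem exists_contDiff_mderiv_eq {n M : ℕ} {e : Fin M → Fin n → ℕ} (he : Function.Injective e)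
    (x : Fin n → ℝ) (ξ : Fin M → ℝ) :
    ∃ P : (Fin n → ℝ) → ℝ, ContDiff ℝ (⊤ : ℕ∞) P ∧ (∀ q, Continuous (mderiv q P)) ∧
      ∀ i, mderiv (e i) P x = ξ i := by
  -- the Taylor polynomial `∑ k, ξ k (y - x) ^ e k / e k !`
  refine ⟨centeredPolynomial x (fun k => ξ k / ∏ j, ((e k j).factorial : ℝ)) e,
    contDiff_centeredPolynomial _ _ _,
    fun q => mderiv_centeredPolynomial x _ e q ▸ (contDiff_centeredPolynomial _ _ _).continuous,
    fun i => ?_⟩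
  have hterm : ∀ k ≠ i, ((∏ j, ((e k j).descFactorial (e i j) : ℝ)) *
      centeredMonomial x (e k - e i) x) = 0 := by
    intro k hki
    rw [centeredMonomial_self]
    split_ifs with hle
    · obtain ⟨j, hj⟩ : ∃ j, e k j < e i j := by
        by_contra! hge
        exact hki (he (le_antisymm (tsub_eq_zero_iff_le.1 hle) hge))
      rw [Finset.prod_eq_zero (Finset.mem_univ j) (by simp [Nat.descFactorial_eq_zero_iff_lt.2 hj]),
        zero_mul]
    · rw [mul_zero]
  rw [mderiv_centeredPolynomial, centeredPolynomial,
    Finset.sum_eq_single i (fun k _ hki => by rw [mul_assoc, hterm k hki, mul_zero]) (by simp),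
    centeredMonomial_self]
  simp only [tsub_self, if_true, Nat.descFactorial_self, mul_one]
  exact div_mul_cancel₀ _ (Finset.prod_ne_zero_iff.2 fun j _ => by positivity)

theorem Filter.EventuallyEq.pder {n : ℕ} {f g : (Fin n → ℝ) → ℝ} {x : Fin n → ℝ}
    (h : f =ᶠ[𝓝 x] g) (i : Fin n) : _root_.pder i f =ᶠ[𝓝 x] _root_.pder i g :=
  (h.fderiv (𝕜 := ℝ)).mono fun y hy => by simp only [_root_.pder, hy]

theorem Filter.EventuallyEq.iterate_pder {n : ℕ} {f g : (Fin n → ℝ) → ℝ} {x : Fin n → ℝ}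
    (h : f =ᶠ[𝓝 x] g) (i : Fin n) (t : ℕ) :
    (_root_.pder i)^[t] f =ᶠ[𝓝 x] (_root_.pder i)^[t] g := by
  induction t with
  | zero => exact h
  | succ t ih =>
    rw [Function.iterate_succ_apply', Function.iterate_succ_apply']
    exact ih.pder i

theorem Filter.EventuallyEq.mderiv {n : ℕ} {f g : (Fin n → ℝ) → ℝ} {x : Fin n → ℝ}
    (h : f =ᶠ[𝓝 x] g) (p : Fin n → ℕ) : _root_.mderiv p f =ᶠ[𝓝 x] _root_.mderiv p g := by
  unfold _root_.mderiv
  induction List.finRange n with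
  | nil => exact h
  | cons a l ih => exact Filter.EventuallyEq.iterate_pder ih a (p a)

theorem Filter.EventuallyEq.TOp_eq {n M : ℕ} (e : Fin M → Fin n → ℕ)
    (F : (Fin n → ℝ) → (Fin M → ℝ) → ℝ) {U V : (Fin n → ℝ) → ℝ} {x : Fin n → ℝ}
    (h : U =ᶠ[𝓝 x] V) : TOp e F U x = TOp e F V x := by
  simp only [TOp, fun i => (h.mderiv (e i)).eq_of_nhds]

theorem ContinuousAt.TOp {n M : ℕ} {e : Fin M → Fin n → ℕ}
    {F : (Fin n → ℝ) → (Fin M → ℝ) → ℝ} {U : (Fin n → ℝ) → ℝ} {x : Fin n → ℝ}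
    (hF : ContinuousAt (fun q : (Fin n → ℝ) × (Fin M → ℝ) => F q.1 q.2)
      (x, fun i => mderiv (e i) U x))
    (hU : ∀ i, ContinuousAt (mderiv (e i) U) x) : ContinuousAt (TOp e F U) x :=
  hF.comp₂ continuousAt_id (continuousAt_pi.2 hU)

theorem exists_contDiff_eventually_TOp_mem_Ioo {n M : ℕ} {e : Fin M → Fin n → ℕ}
    (he : Function.Injective e) {F : (Fin n → ℝ) → (Fin M → ℝ) → ℝ} {f : (Fin n → ℝ) → ℝ}
    {x : Fin n → ℝ} (hF : ∀ ξ, ContinuousAt (fun q : (Fin n → ℝ) × (Fin M → ℝ) => F q.1 q.2) (x, ξ))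
    (hf : ContinuousAt f x) (hfx : f x ∈ interior (range (F x))) {ε : ℝ} (hε : 0 < ε) :
    ∃ P : (Fin n → ℝ) → ℝ, ContDiff ℝ (⊤ : ℕ∞) P ∧
      ∀ᶠ y in 𝓝 x, TOp e F P y ∈ Ioo (f y - ε) (f y) := by
  obtain ⟨t, htx, ⟨ξ, rfl⟩, hεt⟩ : ∃ t < f x, t ∈ range (F x) ∧ f x - ε < t :=
    Filter.Eventually.exists_lt
      (inter_mem (mem_interior_iff_mem_nhds.1 hfx) (Ioi_mem_nhds (sub_lt_self _ hε)))
  obtain ⟨P, hP, hPc, hPx⟩ := exists_contDiff_mderiv_eq he x ξ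
  have hPx' : (fun i => mderiv (e i) P x) = ξ := funext hPx
  have hT : ContinuousAt (fun y => TOp e F P y - f y) x :=
    (ContinuousAt.TOp (hPx' ▸ hF ξ) fun i => (hPc (e i)).continuousAt).sub hf
  have hTx : TOp e F P x - f x ∈ Ioo (-ε) 0 := by
    rw [TOp, hPx']
    constructor <;> linarith
  refine ⟨P, hP, (hT.eventually (Ioo_mem_nhds hTx.1 hTx.2)).mono fun y hy => ?_⟩
  constructor <;> linarith [hy.1, hy.2]

open Function

section Metric

variable {E : Type*} [PseudoMetricSpace E]

open Metric

theorem exists_seq_mem_subset_iUnion_ball [SecondCountableTopology E] {X : Set E} (hX : X.Nonempty)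
    {r : E → ℝ} (hr : ∀ x ∈ X, 0 < r x) :
    ∃ c : ℕ → E, (∀ k, c k ∈ X) ∧ X ⊆ ⋃ k, ball (c k) (r (c k)) := by
  obtain ⟨T, hTX, hTc, hXT⟩ := TopologicalSpace.countable_cover_nhdsWithin
    fun x hx => mem_nhdsWithin_of_mem_nhds (ball_mem_nhds x (hr x hx))
  obtain ⟨x, hx⟩ := hX
  obtain ⟨y, hyT, -⟩ := mem_iUnion₂.1 (hXT hx)
  obtain ⟨c, rfl⟩ := hTc.exists_eq_range ⟨y, hyT⟩
  exact ⟨c, fun k => hTX (mem_range_self k), by simpa [biUnion_range] using hXT⟩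

def disjointedBalls (c : ℕ → E) (r : ℕ → ℝ) (k : ℕ) : Set E :=
  ball (c k) (r k) \ ⋃ j < k, closedBall (c j) (r j)

variable (c : ℕ → E) (r : ℕ → ℝ)

theorem isOpen_disjointedBalls (k : ℕ) : IsOpen (disjointedBalls c r k) :=
  isOpen_ball.sdiff ((finite_Iio k).isClosed_biUnion fun _ _ => isClosed_closedBall)

theorem disjointedBalls_subset_ball (k : ℕ) : disjointedBalls c r k ⊆ ball (c k) (r k) :=
  sdiff_subset

theorem pairwise_disjoint_disjointedBalls : Pairwise (Disjoint on disjointedBalls c r) :=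
  (pairwise_disjoint_on _).2 fun j _ hjk => disjoint_left.2 fun _ hyj hyk =>
    hyk.2 (mem_iUnion₂.2 ⟨j, hjk, ball_subset_closedBall hyj.1⟩)

theorem iUnion_ball_sdiff_iUnion_disjointedBalls_subset :
    (⋃ k, ball (c k) (r k)) \ ⋃ k, disjointedBalls c r k ⊆ ⋃ k, sphere (c k) (r k) := by
  classical
  rintro y ⟨hy, hyV⟩
  have hex : ∃ k, y ∈ closedBall (c k) (r k) :=
    (mem_iUnion.1 hy).imp fun k => (ball_subset_closedBall ·)
  -- the first closed ball containing `y` has `y` on its boundary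
  refine mem_iUnion.2 ⟨Nat.find hex, ?_⟩
  refine mem_sphere.2 (le_antisymm (Nat.find_spec hex) (not_lt.1 fun hlt => hyV ?_))
  refine mem_iUnion.2 ⟨Nat.find hex, hlt, fun hmem => ?_⟩
  obtain ⟨j, hj, hyj⟩ := mem_iUnion₂.1 hmem
  exact Nat.find_min hex hj hyj

end Metric

theorem measure_iUnion_ball_sdiff_iUnion_disjointedBalls {E : Type*} [NormedAddCommGroup E]
    [NormedSpace ℝ E] [MeasurableSpace E] [BorelSpace E] [FiniteDimensional ℝ E]
    (μ : MeasureTheory.Measure E) [μ.IsAddHaarMeasure] (c : ℕ → E) {r : ℕ → ℝ}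
    (hr : ∀ k, 0 < r k) :
    μ ((⋃ k, Metric.ball (c k) (r k)) \ ⋃ k, disjointedBalls c r k) = 0 :=
  MeasureTheory.measure_mono_null (iUnion_ball_sdiff_iUnion_disjointedBalls_subset c r)
    (MeasureTheory.measure_iUnion_null fun k =>
      MeasureTheory.Measure.addHaar_sphere_of_ne_zero μ _ (hr k).ne')

theorem isClosed_preimage_val_sdiff {α : Type*} [TopologicalSpace α] {X W : Set α}
    (hW : IsOpen W) : IsClosed (Subtype.val ⁻¹' (X \ W) : Set X) := by
  rw [preimage_sdiff, Subtype.coe_preimage_self, ← compl_eq_univ_sdiff]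
  exact (hW.preimage continuous_subtype_val).isClosed_compl

theorem exists_forall_eqOn_of_pairwise_disjoint {ι α β : Type*} [Nonempty β] {V : ι → Set α}
    (hV : Pairwise (Disjoint on V)) (g : ι → α → β) : ∃ U : α → β, ∀ k, EqOn U (g k) (V k) := by
  classical
  refine ⟨fun y => if h : ∃ k, y ∈ V k then g h.choose y else Classical.arbitrary β,
    fun k y hy => ?_⟩
  have h : ∃ k, y ∈ V k := ⟨k, hy⟩
  have hk : h.choose = k := hV.eq (not_disjoint_iff.2 ⟨y, h.choose_spec, hy⟩)
  simp only [dif_pos h, hk]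

theorem isNowhereDense_preimage_val_of_null {α : Type*} [TopologicalSpace α] [MeasurableSpace α]
    {μ : MeasureTheory.Measure α} [μ.IsOpenPosMeasure] {X Γ : Set α} (hX : IsOpen X)
    (hΓ : IsClosed (Subtype.val ⁻¹' Γ : Set X)) (hΓ0 : μ Γ = 0) :
    IsNowhereDense (Subtype.val ⁻¹' Γ : Set X) := by
  rw [hΓ.isNowhereDense_iff, ← hX.isOpenMap_subtype_val.preimage_interior_eq_interior_preimage
    continuous_subtype_val, MeasureTheory.Measure.interior_eq_empty_of_null hΓ0, preimage_empty]

theorem approximate_solution_off_closed_nowhere_dense_null_general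
    {n M : ℕ} (X : Set (Fin n → ℝ)) (hXopen : IsOpen X) (hXne : X.Nonempty)
    (e : Fin M → (Fin n → ℕ)) (he : Function.Injective e)
    (F : (Fin n → ℝ) → (Fin M → ℝ) → ℝ)
    (hF : ContinuousOn (fun q : (Fin n → ℝ) × (Fin M → ℝ) => F q.1 q.2) (X ×ˢ Set.univ))
    (f : (Fin n → ℝ) → ℝ) (hf : ContinuousOn f X)
    (hrc : ∀ x ∈ X, f x ∈ interior (Set.range (F x))) :
    ∀ ε > (0 : ℝ), ∃ Γ : Set (Fin n → ℝ), Γ ⊆ X ∧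
      IsClosed (Subtype.val ⁻¹' Γ : Set X) ∧
      IsNowhereDense (Subtype.val ⁻¹' Γ : Set X) ∧
      MeasureTheory.volume Γ = 0 ∧
      ∃ U : (Fin n → ℝ) → ℝ, ContDiffOn ℝ (⊤ : ℕ∞) U (X \ Γ) ∧
        ∀ x ∈ X \ Γ, f x - ε ≤ TOp e F U x ∧ TOp e F U x ≤ f x := by
  intro ε hε
  have hloc (x) (hx : x ∈ X) : ∃ r > 0, ∃ P : (Fin n → ℝ) → ℝ, ContDiff ℝ (⊤ : ℕ∞) P ∧
      ∀ y ∈ Metric.ball x r, TOp e F P y ∈ Ioo (f y - ε) (f y) := by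
    obtain ⟨P, hP, hPT⟩ := exists_contDiff_eventually_TOp_mem_Ioo he
      (fun ξ => hF.continuousAt ((hXopen.prod isOpen_univ).mem_nhds ⟨hx, mem_univ ξ⟩))
      (hf.continuousAt (hXopen.mem_nhds hx)) (hrc x hx) hε
    obtain ⟨r, hr, hball⟩ := Metric.eventually_nhds_iff_ball.1 hPT
    exact ⟨r, hr, P, hP, hball⟩
  choose! r hr P hP hPT using hloc
  obtain ⟨c, hcX, hXc⟩ := exists_seq_mem_subset_iUnion_ball hXne hr
  set V := disjointedBalls c (r ∘ c)
  obtain ⟨U, hU⟩ := exists_forall_eqOn_of_pairwise_disjoint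
    (pairwise_disjoint_disjointedBalls c (r ∘ c)) fun k => P (c k)
  have hUP (k) (y) (hy : y ∈ V k) : U =ᶠ[𝓝 y] P (c k) :=
    (hU k).eventuallyEq_of_mem ((isOpen_disjointedBalls c _ k).mem_nhds hy)
  have hΓ : IsClosed (Subtype.val ⁻¹' (X \ ⋃ k, V k) : Set X) :=
    isClosed_preimage_val_sdiff (isOpen_iUnion (isOpen_disjointedBalls c _))
  have hΓ0 : MeasureTheory.volume (X \ ⋃ k, V k) = 0 :=
    MeasureTheory.measure_mono_null (sdiff_subset_sdiff_left hXc)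
      (measure_iUnion_ball_sdiff_iUnion_disjointedBalls _ c fun k => hr _ (hcX k))
  refine ⟨X \ ⋃ k, V k, sdiff_subset, hΓ, isNowhereDense_preimage_val_of_null hXopen hΓ hΓ0,
    hΓ0, U, ?_, ?_⟩ <;> rw [sdiff_sdiff_right_self] <;> rintro y ⟨-, hy⟩ <;>
    obtain ⟨k, hk⟩ := mem_iUnion.1 hy
  · exact ((hP _ (hcX k)).contDiffAt.congr_of_eventuallyEq (hUP k y hk)).contDiffWithinAt
  · rw [(hUP k y hk).TOp_eq]
    have hPy := hPT _ (hcX k) y (disjointedBalls_subset_ball c _ k hk)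
    exact ⟨hPy.1.le, hPy.2.le⟩

/-- **Proposition 1 with Remark 1.1.** As in Proposition 1, and in addition the closed
nowhere dense singularity set `Γ_ε` can be chosen with Lebesgue measure zero. -/
theorem approximate_solution_off_closed_nowhere_dense_null
    {n m M : ℕ} (X : Set (Fin n → ℝ)) (hXopen : IsOpen X) (hXne : X.Nonempty)
    (e : Fin M → (Fin n → ℕ)) (he : Function.Injective e)
    (hrange : ∀ p : Fin n → ℕ, (∑ i, p i) ≤ m ↔ p ∈ Set.range e)
    (F : (Fin n → ℝ) → (Fin M → ℝ) → ℝ)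
    (hF : ContinuousOn (fun q : (Fin n → ℝ) × (Fin M → ℝ) => F q.1 q.2) (X ×ˢ Set.univ))
    (f : (Fin n → ℝ) → ℝ) (hf : ContinuousOn f X)
    (hrc : ∀ x ∈ X, f x ∈ interior (Set.range (F x))) :
    ∀ ε > (0 : ℝ), ∃ Γ : Set (Fin n → ℝ), Γ ⊆ X ∧
      IsClosed (Subtype.val ⁻¹' Γ : Set X) ∧
      IsNowhereDense (Subtype.val ⁻¹' Γ : Set X) ∧
      MeasureTheory.volume Γ = 0 ∧
      ∃ U : (Fin n → ℝ) → ℝ, ContDiffOn ℝ (⊤ : ℕ∞) U (X \ Γ) ∧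
        ∀ x ∈ X \ Γ, f x - ε ≤ TOp e F U x ∧ TOp e F U x ≤ f x :=
  approximate_solution_off_closed_nowhere_dense_null_general X hXopen hXne e he F hF f hf hrc
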